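/- Let C be a finite category with consolidation monoid C^cd, and let c be an object of C. For elements x, y of the local monoid C_c = C(c,c), x and y are J-equivalent in C^cd if and only if they are J-equivalent in the monoid C_c. -/
import Mathlib


/-- A finite category presented by its set of arrows with a partial composition. -/
structure FinCat (Obj : Type) where
  Arr : Type
  src : Arr → Obj
  tgt : Arr → Obj
  id : Obj → Arr
  comp : (f g : Arr) → tgt f = src g → Arr
  src_id : ∀ a, src (id a) = a
  tgt_id : ∀ a, tgt (id a) = a
  src_comp : ∀ f g h, src (comp f g h) = src f
  tgt_comp : ∀ f g h, tgt (comp f g h) = tgt g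
  id_comp : ∀ (f : Arr) (h : tgt (id (src f)) = src f), comp (id (src f)) f h = f
  comp_id : ∀ (f : Arr) (h : tgt f = src (id (tgt f))), comp f (id (tgt f)) h = f
  assoc : ∀ (f g k : Arr) (h1 : tgt f = src g) (h2 : tgt g = src k) h3 h4,
    comp (comp f g h1) k h3 = comp f (comp g k h2) h4

/-- The underlying set of the consolidation monoid `C^cd`:
arrows of `C` together with an adjoined zero and identity. -/
inductive Cd {Obj : Type} (C : FinCat Obj) where
  | zero : Cd C
  | one : Cd C
  | arr : C.Arr → Cd C

variable {Obj : Type} [DecidableEq Obj]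

/-- Multiplication of the consolidation: composition where defined, `0` otherwise,
with `1` an adjoined identity and `0` absorbing. -/
def cdMul (C : FinCat Obj) : Cd C → Cd C → Cd C
  | .one, x => x
  | .zero, _ => .zero
  | x, .one => x
  | _, .zero => .zero
  | .arr f, .arr g => if h : C.tgt f = C.src g then .arr (C.comp f g h) else .zero

theorem cdMul_zero (C : FinCat Obj) (x : Cd C) : cdMul C x Cd.zero = Cd.zero := by
  cases x <;> rfl
theorem cdZero_mul (C : FinCat Obj) (x : Cd C) : cdMul C Cd.zero x = Cd.zero := by
  cases x <;> rfl
theorem cdMul_one (C : FinCat Obj) (x : Cd C) : cdMul C x Cd.one = x := by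
  cases x <;> rfl
theorem cdOne_mul (C : FinCat Obj) (x : Cd C) : cdMul C Cd.one x = x := by
  cases x <;> rfl

theorem cdMul_assoc (C : FinCat Obj) (x y z : Cd C) :
    cdMul C (cdMul C x y) z = cdMul C x (cdMul C y z) := by
  cases x <;> cases y <;> cases z <;>
    (try simp only [cdMul_zero, cdZero_mul, cdMul_one, cdOne_mul]) <;> (try rfl)
  case arr.arr.arr f g k =>
    by_cases h1 : C.tgt f = C.src g
    · by_cases h2 : C.tgt g = C.src k
      · show cdMul C (dite _ _ _) _ = cdMul C _ (dite _ _ _)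
        rw [dif_pos h1, dif_pos h2]
        show dite _ _ _ = dite _ _ _
        rw [dif_pos (show C.tgt (C.comp f g h1) = C.src k by rw [C.tgt_comp]; exact h2),
            dif_pos (show C.tgt f = C.src (C.comp g k h2) by rw [C.src_comp]; exact h1)]
        exact congrArg Cd.arr (C.assoc f g k h1 h2 _ _)
      · show cdMul C (dite _ _ _) _ = cdMul C _ (dite _ _ _)
        rw [dif_pos h1, dif_neg h2]
        show dite _ _ _ = Cd.zero
        rw [dif_neg (show ¬ C.tgt (C.comp f g h1) = C.src k by rw [C.tgt_comp]; exact h2)]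
    · show cdMul C (dite _ _ _) _ = cdMul C _ (cdMul C _ _)
      rw [dif_neg h1]
      by_cases h2 : C.tgt g = C.src k
      · show Cd.zero = cdMul C _ (dite _ _ _)
        rw [dif_pos h2]
        show Cd.zero = dite _ _ _
        rw [dif_neg (show ¬ C.tgt f = C.src (C.comp g k h2) by rw [C.src_comp]; exact h1)]
      · show Cd.zero = cdMul C _ (dite _ _ _)
        rw [dif_neg h2, cdMul_zero]

instance cdMonoid (C : FinCat Obj) : Monoid (Cd C) where
  mul := cdMul C
  one := .one
  one_mul x := by cases x <;> rfl
  mul_one x := by cases x <;> rfl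
  mul_assoc := cdMul_assoc C

/-- Green's R-equivalence in a monoid. -/
def RE {M : Type} [Monoid M] (s t : M) : Prop := (∃ a, s * a = t) ∧ (∃ a, t * a = s)
/-- Green's L-equivalence in a monoid. -/
def LE' {M : Type} [Monoid M] (s t : M) : Prop := (∃ a, a * s = t) ∧ (∃ a, a * t = s)
/-- Green's H-equivalence in a monoid. -/
def HE {M : Type} [Monoid M] (s t : M) : Prop := RE s t ∧ LE' s t
/-- Green's J-equivalence in a monoid. -/
def JE {M : Type} [Monoid M] (s t : M) : Prop :=
  (∃ a b, a * s * b = t) ∧ (∃ a b, a * t * b = s)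

/-- Green's R-equivalence relative to a subset `S` (multipliers taken in `S`). -/
def REOn {M : Type} [Monoid M] (S : Set M) (s t : M) : Prop :=
  (∃ a ∈ S, s * a = t) ∧ (∃ a ∈ S, t * a = s)
def LEOn {M : Type} [Monoid M] (S : Set M) (s t : M) : Prop :=
  (∃ a ∈ S, a * s = t) ∧ (∃ a ∈ S, a * t = s)
def HEOn {M : Type} [Monoid M] (S : Set M) (s t : M) : Prop := REOn S s t ∧ LEOn S s t
def JEOn {M : Type} [Monoid M] (S : Set M) (s t : M) : Prop :=
  (∃ a ∈ S, ∃ b ∈ S, a * s * b = t) ∧ (∃ a ∈ S, ∃ b ∈ S, a * t * b = s)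

/-- The local monoid `C_c = C(c,c)`, viewed as a subset of the consolidation. -/
def locSet (C : FinCat Obj) (c : Obj) : Set (Cd C) :=
  {x | ∃ f : C.Arr, x = Cd.arr f ∧ C.src f = c ∧ C.tgt f = c}

theorem cd_hmul (C : FinCat Obj) (x y : Cd C) : x * y = cdMul C x y := rfl

theorem key_lemma (C : FinCat Obj) (c : Obj) (f g : C.Arr)
    (hf1 : C.src f = c) (hf2 : C.tgt f = c) (hg1 : C.src g = c) (hg2 : C.tgt g = c)
    (h : ∃ a b : Cd C, a * Cd.arr f * b = Cd.arr g) :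
    ∃ a ∈ locSet C c, ∃ b ∈ locSet C c, a * Cd.arr f * b = Cd.arr g := by
  obtain ⟨a, b, h⟩ := h
  subst hf1
  set e : Cd C := Cd.arr (C.id (C.src f)) with he_def
  have he : e ∈ locSet C (C.src f) := ⟨_, rfl, C.src_id _, C.tgt_id _⟩
  have hf : Cd.arr f ∈ locSet C (C.src f) := ⟨f, rfl, rfl, hf2⟩
  have hef : e * Cd.arr f = Cd.arr f := by
    rw [cd_hmul]
    show dite _ _ _ = _
    rw [dif_pos (show C.tgt (C.id (C.src f)) = C.src f from C.tgt_id _)]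
    exact congrArg Cd.arr (C.id_comp f _)
  have hfe : ∀ k : C.Arr, C.tgt k = C.src f → Cd.arr k * e = Cd.arr k := by
    intro k hk
    rw [cd_hmul]
    show dite _ _ _ = _
    rw [dif_pos (show C.tgt k = C.src (C.id (C.src f)) by rw [C.src_id, hk])]
    refine congrArg Cd.arr ?_
    have := C.comp_id k (by rw [C.src_id])
    convert this using 2 <;> rw [hk]
  cases a with
  | zero => simp only [cd_hmul, cdZero_mul] at h; exact absurd h (by simp)
  | one =>
    simp only [cd_hmul, cdOne_mul] at h
    rw [← cd_hmul] at h
    cases b with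
    | zero => rw [cd_hmul, cdMul_zero] at h; exact absurd h (by simp)
    | one =>
      rw [cd_hmul, cdMul_one] at h
      exact ⟨e, he, e, he, by rw [hef, hfe f hf2, h]⟩
    | arr q =>
      refine ⟨e, he, Cd.arr q, ?_, by rw [hef]; exact h⟩
      rw [cd_hmul] at h
      by_cases h2 : C.tgt f = C.src q
      · rw [show cdMul C (Cd.arr f) (Cd.arr q) = dite _ _ _ from rfl, dif_pos h2] at h
        injection h with h
        refine ⟨q, rfl, ?_, ?_⟩
        · rw [← h2, hf2]
        · rw [← C.tgt_comp f q h2, h, hg2]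
      · rw [show cdMul C (Cd.arr f) (Cd.arr q) = dite _ _ _ from rfl, dif_neg h2] at h
        exact absurd h (by simp)
  | arr p =>
    cases b with
    | zero => rw [cd_hmul, cdMul_zero] at h; exact absurd h (by simp)
    | one =>
      rw [cd_hmul, cdMul_one, cd_hmul] at h
      have hpf : Cd.arr p * Cd.arr f = Cd.arr g := h
      refine ⟨Cd.arr p, ?_, e, he, by rw [hpf, hfe g hg2]⟩
      by_cases h1 : C.tgt p = C.src f
      · rw [show cdMul C (Cd.arr p) (Cd.arr f) = dite _ _ _ from rfl, dif_pos h1] at h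
        injection h with h
        refine ⟨p, rfl, ?_, h1⟩
        rw [← C.src_comp p f h1, h, hg1]
      · rw [show cdMul C (Cd.arr p) (Cd.arr f) = dite _ _ _ from rfl, dif_neg h1] at h
        exact absurd h (by simp)
    | arr q =>
      refine ⟨Cd.arr p, ?_, Cd.arr q, ?_, h⟩ <;>
        rw [cd_hmul, cd_hmul] at h
      all_goals {
        by_cases h1 : C.tgt p = C.src f
        · rw [show cdMul C (Cd.arr p) (Cd.arr f) = dite _ _ _ from rfl, dif_pos h1] at h
          by_cases h2 : C.tgt (C.comp p f h1) = C.src q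
          · rw [show cdMul C (Cd.arr (C.comp p f h1)) (Cd.arr q) = dite _ _ _ from rfl,
              dif_pos h2] at h
            injection h with h
            first
            | exact ⟨p, rfl, by rw [← C.src_comp p f h1, ← C.src_comp _ q h2, h, hg1], h1⟩
            | exact ⟨q, rfl, by rw [← h2, C.tgt_comp, hf2],
                by rw [← C.tgt_comp _ q h2, h, hg2]⟩
          · rw [show cdMul C (Cd.arr (C.comp p f h1)) (Cd.arr q) = dite _ _ _ from rfl,
              dif_neg h2] at h
            exact absurd h (by simp)
        · rw [show cdMul C (Cd.arr p) (Cd.arr f) = dite _ _ _ from rfl, dif_neg h1,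
            cdZero_mul] at h
          exact absurd h (by simp)
      }

/-- for `x, y` in the local monoid `C_c`, `x` and `y` are J-equivalent
in the consolidation `C^cd` iff they are J-equivalent in the monoid `C_c`. -/
theorem stmt_6 (C : FinCat Obj) [Fintype Obj] [Fintype C.Arr] (c : Obj)
    (x y : Cd C) (hx : x ∈ locSet C c) (hy : y ∈ locSet C c) :
    JE x y ↔ JEOn (locSet C c) x y := by
  obtain ⟨f, rfl, hf1, hf2⟩ := hx
  obtain ⟨g, rfl, hg1, hg2⟩ := hy
  constructor
  · rintro ⟨h1, h2⟩
    exact ⟨key_lemma C c f g hf1 hf2 hg1 hg2 h1, key_lemma C c g f hg1 hg2 hf1 hf2 h2⟩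
  · rintro ⟨⟨a, _, b, _, h⟩, ⟨a', _, b', _, h'⟩⟩
    exact ⟨⟨a, b, h⟩, ⟨a', b', h'⟩⟩
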